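/- Let a, b ≥ 1 with n = a·b ≥ 2, and let ρ₀ be an n×n complex hermitian matrix indexed by Fin a × Fin b, with trace 1 and det(ρ₀^Γ) = 0. Then the following are equivalent: (a) tr(adjugate(ρ₀^Γ) · H^Γ) = 0 for every hermitian matrix H (indexed by Fin a × Fin b) with tr H = 0; (b) rank(ρ₀^Γ) ≤ n - 2 (equivalently, 0 is an eigenvalue of ρ₀^Γ of multiplicity at least two). -/

import Mathlib

/-- Partial transpose with respect to the second tensor factor:
`(ρ^Γ)_{(i,j),(k,l)} = ρ_{(i,l),(k,j)}`. -/
def partialTranspose {a b : ℕ} (ρ : Matrix (Fin a × Fin b) (Fin a × Fin b) ℂ) :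
    Matrix (Fin a × Fin b) (Fin a × Fin b) ℂ :=
  fun p q => ρ (p.1, q.2) (q.1, p.2)

/-!
Write `M = ρ₀^Γ`. Since `Γ` is an involution preserving hermiticity and trace, condition (a)
says that `tr (adj M * K) = 0` for every traceless hermitian `K`, hence (splitting a matrix into
real and imaginary parts) for every traceless `K`. Testing against `K = X - tr X • M`, which is
traceless because `tr M = 1`, and using `adj M * M = det M • 1 = 0`, gives `tr (adj M * X) = 0`
for all `X`, i.e. `adj M = 0`. Diagonalising the hermitian matrix `M`, `adj M = 0` means that at
least two eigenvalues vanish, i.e. `rank M ≤ n - 2`.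
-/

open Matrix ComplexStarModule

theorem Fintype.forall_exists_ne_iff_one_lt_card_subtype {α : Type*} [Fintype α] [Nonempty α]
    (p : α → Prop) [DecidablePred p] :
    (∀ i, ∃ j ≠ i, p j) ↔ 1 < Fintype.card {j // p j} := by
  rw [Fintype.one_lt_card_iff]
  constructor
  · intro h
    obtain ⟨j, -, hj⟩ := h (Classical.arbitrary α)
    obtain ⟨k, hkj, hk⟩ := h j
    exact ⟨⟨j, hj⟩, ⟨k, hk⟩, fun hjk => hkj (congrArg Subtype.val hjk).symm⟩
  · rintro ⟨⟨j, hj⟩, ⟨k, hk⟩, hjk⟩ i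
    by_cases hji : j = i
    · exact ⟨k, fun hki => hjk (Subtype.ext (hji.trans hki.symm)), hk⟩
    · exact ⟨j, hji, hj⟩

namespace Matrix

variable {n R : Type*} [Fintype n]

theorem trace_mul_eq_zero_of_forall_isHermitian {A K : Matrix n n ℂ} (hK : K.trace = 0)
    (h : ∀ H : Matrix n n ℂ, H.IsHermitian → H.trace = 0 → (A * H).trace = 0) :
    (A * K).trace = 0 := by
  have hKstar : (star K).trace = 0 := by
    rw [star_eq_conjTranspose, trace_conjTranspose, hK, star_zero]
  have hre := h (ℜ K) (isHermitian_iff_isSelfAdjoint.2 (ℜ K).2)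
    (by rw [realPart_apply_coe, trace_smul, trace_add, hK, hKstar, add_zero, smul_zero])
  have him := h (ℑ K) (isHermitian_iff_isSelfAdjoint.2 (ℑ K).2)
    (by rw [imaginaryPart_apply_coe, trace_smul, trace_smul, trace_sub, hK, hKstar, sub_zero,
      smul_zero, smul_zero])
  rw [← realPart_add_I_smul_imaginaryPart K, mul_add, Matrix.mul_smul, trace_add, trace_smul,
    hre, him, smul_zero, add_zero]

theorem eq_zero_of_forall_trace_mul_eq_zero [CommRing R] {A M : Matrix n n R} (hAM : A * M = 0)
    (hM : M.trace = 1) (h : ∀ K : Matrix n n R, K.trace = 0 → (A * K).trace = 0) : A = 0 := by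
  refine ext_iff_trace_mul_right.2 fun X => ?_
  have := h (X - X.trace • M) (by rw [trace_sub, trace_smul, hM, smul_eq_mul, mul_one, sub_self])
  rw [Matrix.zero_mul, trace_zero]
  rwa [mul_sub, Matrix.mul_smul, hAM, smul_zero, sub_zero] at this

variable [DecidableEq n]

open Classical in
theorem adjugate_diagonal_eq_zero_iff [CommRing R] [IsDomain R] [Nonempty n] (d : n → R) :
    (diagonal d).adjugate = 0 ↔ 1 < Fintype.card {i // d i = 0} := by
  rw [adjugate_diagonal, diagonal_eq_zero, funext_iff,
    ← Fintype.forall_exists_ne_iff_one_lt_card_subtype]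
  simp only [Pi.zero_apply, Finset.prod_eq_zero_iff, Finset.mem_erase, Finset.mem_univ, and_true]

theorem adjugate_mul_mul_eq_zero [CommRing R] {A : Matrix n n R} (P Q : Matrix n n R)
    (hA : A.adjugate = 0) : (P * A * Q).adjugate = 0 := by
  rw [adjugate_mul_distrib, adjugate_mul_distrib, hA, zero_mul, mul_zero]

theorem IsHermitian.adjugate_eq_zero_iff {𝕜 : Type*} [RCLike 𝕜] [Nonempty n]
    {A : Matrix n n 𝕜} (hA : A.IsHermitian) :
    A.adjugate = 0 ↔ A.rank + 2 ≤ Fintype.card n := by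
  have hdiag :
      A.adjugate = 0 ↔ (diagonal ((↑) ∘ hA.eigenvalues : n → 𝕜)).adjugate = 0 := by
    constructor <;> intro h
    · rw [← hA.conjStarAlgAut_star_eigenvectorUnitary, Unitary.conjStarAlgAut_apply]
      exact adjugate_mul_mul_eq_zero _ _ h
    · rw [hA.spectral_theorem, Unitary.conjStarAlgAut_apply]
      exact adjugate_mul_mul_eq_zero _ _ h
  simp only [hdiag, adjugate_diagonal_eq_zero_iff, Function.comp_apply, RCLike.ofReal_eq_zero,
    hA.rank_eq_card_non_zero_eigs]
  have hcompl : Fintype.card {i // hA.eigenvalues i ≠ 0} =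
      Fintype.card n - Fintype.card {i // hA.eigenvalues i = 0} :=
    Fintype.card_subtype_compl _
  have := Fintype.card_subtype_le (fun i => hA.eigenvalues i = 0)
  omega

end Matrix

section PartialTranspose

variable {a b : ℕ}

@[simp]
theorem partialTranspose_partialTranspose (ρ : Matrix (Fin a × Fin b) (Fin a × Fin b) ℂ) :
    partialTranspose (partialTranspose ρ) = ρ := rfl

@[simp]
theorem trace_partialTranspose (ρ : Matrix (Fin a × Fin b) (Fin a × Fin b) ℂ) :
    (partialTranspose ρ).trace = ρ.trace := rfl

theorem Matrix.IsHermitian.partialTranspose {ρ : Matrix (Fin a × Fin b) (Fin a × Fin b) ℂ}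
    (h : ρ.IsHermitian) : (partialTranspose ρ).IsHermitian :=
  congrArg _root_.partialTranspose h.eq

end PartialTranspose

theorem singular_point_of_partialTranspose_iff_rank_le_general
    (a b : ℕ) (hn : 2 ≤ a * b)
    (ρ₀ : Matrix (Fin a × Fin b) (Fin a × Fin b) ℂ)
    (hherm : ρ₀.IsHermitian) (htr : ρ₀.trace = 1)
    (hdet : (partialTranspose ρ₀).det = 0) :
    (∀ H : Matrix (Fin a × Fin b) (Fin a × Fin b) ℂ, H.IsHermitian → H.trace = 0 →
        ((partialTranspose ρ₀).adjugate * partialTranspose H).trace = 0)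
      ↔ (partialTranspose ρ₀).rank ≤ a * b - 2 := by
  have hcard : Fintype.card (Fin a × Fin b) = a * b := by simp
  have : Nonempty (Fin a × Fin b) := Fintype.card_pos_iff.1 (by omega)
  have hadj := hherm.partialTranspose.adjugate_eq_zero_iff
  rw [hcard] at hadj
  constructor
  · intro h
    suffices (partialTranspose ρ₀).adjugate = 0 by have := hadj.1 this; omega
    refine eq_zero_of_forall_trace_mul_eq_zero (M := partialTranspose ρ₀) ?_ ?_ fun K hK =>
      trace_mul_eq_zero_of_forall_isHermitian hK fun H hH htH => ?_
    · rw [adjugate_mul, hdet, zero_smul]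
    · rwa [trace_partialTranspose]
    · simpa using h _ hH.partialTranspose (by rwa [trace_partialTranspose])
  · intro hrank H _ _
    rw [hadj.2 (by omega), Matrix.zero_mul, trace_zero]

/-- For `a, b ≥ 1` with `n = a·b ≥ 2` and an hermitian `ρ₀` (indexed by
`Fin a × Fin b`) with trace 1 and `det ρ₀^Γ = 0`, the gradient of `ρ ↦ det ρ^Γ` restricted to
the affine space of trace-1 hermitian matrices vanishes at `ρ₀` (i.e.
`tr(adjugate(ρ₀^Γ) · H^Γ) = 0` for all traceless hermitian `H`) iff `rank ρ₀^Γ ≤ n - 2`. -/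
theorem singular_point_of_partialTranspose_iff_rank_le
    (a b : ℕ) (ha : 1 ≤ a) (hb : 1 ≤ b) (hn : 2 ≤ a * b)
    (ρ₀ : Matrix (Fin a × Fin b) (Fin a × Fin b) ℂ)
    (hherm : ρ₀.IsHermitian) (htr : ρ₀.trace = 1)
    (hdet : (partialTranspose ρ₀).det = 0) :
    (∀ H : Matrix (Fin a × Fin b) (Fin a × Fin b) ℂ, H.IsHermitian → H.trace = 0 →
        ((partialTranspose ρ₀).adjugate * partialTranspose H).trace = 0)
      ↔ (partialTranspose ρ₀).rank ≤ a * b - 2 :=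
  singular_point_of_partialTranspose_iff_rank_le_general a b hn ρ₀ hherm htr hdet
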